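/- Let (v_ε) be an S-moderate net of Schwartz functions on ℝ^d and let Γ ⊆ ℝ^d \ {0} be a cone (tΓ ⊆ Γ for all t > 0). Then the following are equivalent: (1) for every moderate fast scale net (ξ_ε) with ξ_ε ∈ Γ for all ε, the net (\hat v_ε(ξ_ε)) is negligible; (2) for each integer m ≥ 1, sup over {ξ ∈ Γ : |ξ| ≥ ε^{−1/m}} of |\hat v_ε(ξ)| ≤ ε^m for small ε; (3) there exists N ∈ ℕ such that for each integer m ≥ 1, sup over ξ ∈ Γ of ⟨ξ⟩^m |\hat v_ε(ξ)| ≤ ε^{−N} for small ε. -/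

import Mathlib

open MeasureTheory Set Metric
open scoped RealInnerProductSpace

noncomputable section

/-- Euclidean space `ℝ^d`. -/
abbrev Eu (d : ℕ) : Type := EuclideanSpace ℝ (Fin d)

/-- A property of `ε` holds "for small ε", i.e. on some interval `(0, ε₀]`. -/
def SmallE (P : ℝ → Prop) : Prop :=
  ∃ ε₀ : ℝ, 0 < ε₀ ∧ ∀ ε : ℝ, 0 < ε → ε ≤ ε₀ → P ε

/-- A net in a normed space is moderate. -/
def ModNet {V : Type*} [NormedAddCommGroup V] (x : ℝ → V) : Prop :=
  ∃ N : ℕ, SmallE fun ε => ‖x ε‖ ≤ ε ^ (-(N : ℝ))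

/-- A net in a normed space is negligible. -/
def NegNet {V : Type*} [NormedAddCommGroup V] (x : ℝ → V) : Prop :=
  ∀ m : ℕ, SmallE fun ε => ‖x ε‖ ≤ ε ^ (m : ℝ)

/-- A fast scale infinitesimal net. -/
def FastInf {V : Type*} [NormedAddCommGroup V] (x : ℝ → V) : Prop :=
  ∃ a : ℝ, 0 < a ∧ SmallE fun ε => ‖x ε‖ ≤ ε ^ a

/-- A slow scale infinitesimal net of positive reals. -/
def SlowInfPos (r : ℝ → ℝ) : Prop :=
  (∀ ε : ℝ, 0 < ε → ε ≤ 1 → 0 < r ε) ∧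
    ∀ a : ℝ, 0 < a → SmallE fun ε => ε ^ a ≤ r ε ∧ r ε ≤ a

/-- A fast scale net. -/
def FastScale {V : Type*} [NormedAddCommGroup V] (x : ℝ → V) : Prop :=
  ∃ a : ℝ, 0 < a ∧ SmallE fun ε => ε ^ (-a) ≤ ‖x ε‖

/-- A slow scale net. -/
def SlowScale {V : Type*} [NormedAddCommGroup V] (x : ℝ → V) : Prop :=
  ∀ a : ℝ, 0 < a → SmallE fun ε => ‖x ε‖ ≤ ε ^ (-a)

/-- A slow scale net of positive reals. -/
def SlowScalePos (R : ℝ → ℝ) : Prop :=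
  (∀ ε : ℝ, 0 < ε → ε ≤ 1 → 0 < R ε) ∧
    ∀ a : ℝ, 0 < a → SmallE fun ε => R ε ≤ ε ^ (-a)

/-- First order partial derivative in the `i`-th coordinate direction. -/
def pd {d : ℕ} {F : Type*} [NormedAddCommGroup F] [NormedSpace ℝ F]
    (i : Fin d) (f : Eu d → F) : Eu d → F :=
  fun x => fderiv ℝ f x (EuclideanSpace.single i 1)

/-- Iterated partial derivative `∂^α` along a list of coordinate directions
(a multi-index `α`). -/
def pdL {d : ℕ} {F : Type*} [NormedAddCommGroup F] [NormedSpace ℝ F]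
    (L : List (Fin d)) (f : Eu d → F) : Eu d → F :=
  L.foldr pd f

/-- A moderate net of smooth functions on an open set `Ω`. -/
def SmoothModNetOn {d : ℕ} (Ω : Set (Eu d)) (u : ℝ → Eu d → ℂ) : Prop :=
  (∀ ε : ℝ, 0 < ε → ε ≤ 1 → ContDiffOn ℝ (⊤ : ℕ∞) (u ε) Ω) ∧
    ∀ K : Set (Eu d), IsCompact K → K ⊆ Ω → ∀ L : List (Fin d), ∃ N : ℕ,
      SmallE fun ε => ∀ x ∈ K, ‖pdL L (u ε) x‖ ≤ ε ^ (-(N : ℝ))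

/-- A moderate net of smooth functions with supports all contained in one
common compact subset of `Ω`. -/
def CptModNet {d : ℕ} (Ω : Set (Eu d)) (v : ℝ → Eu d → ℂ) : Prop :=
  (∀ ε : ℝ, 0 < ε → ε ≤ 1 → ContDiff ℝ (⊤ : ℕ∞) (v ε)) ∧
  (∃ K : Set (Eu d), IsCompact K ∧ K ⊆ Ω ∧
    ∀ ε : ℝ, 0 < ε → ε ≤ 1 → tsupport (v ε) ⊆ K) ∧
  (∀ L : List (Fin d), ∃ N : ℕ, SmallE fun ε =>
    ∀ x : Eu d, ‖pdL L (v ε) x‖ ≤ ε ^ (-(N : ℝ)))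

/-- The Fourier transform `∫ e^{-i x·ξ} w(x) dx`. -/
def FT {d : ℕ} (w : Eu d → ℂ) (ξ : Eu d) : ℂ :=
  ∫ x : Eu d, Complex.exp (-(Complex.I * ((⟪x, ξ⟫ : ℝ) : ℂ))) * w x

/-- The net `(u_ε)` is microlocally regular at the generalized point `(x₀, ξ₀)`. -/
def MicroReg {d : ℕ} (Ω : Set (Eu d)) (u : ℝ → Eu d → ℂ) (x₀ ξ₀ : ℝ → Eu d) : Prop :=
  ∃ v : ℝ → Eu d → ℂ, CptModNet Ω v ∧
    (∀ m : ℕ, 1 ≤ m → SmallE fun ε => ∀ x : Eu d,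
      ‖x - x₀ ε‖ ≤ ε ^ (1 / (m : ℝ)) → ‖u ε x - v ε x‖ ≤ ε ^ (m : ℝ)) ∧
    (∀ m : ℕ, 1 ≤ m → SmallE fun ε => ∀ ξ : Eu d,
      ε ^ (-(1 / (m : ℝ))) ≤ ‖ξ‖ → ‖‖ξ‖⁻¹ • ξ - ξ₀ ε‖ ≤ ε ^ (1 / (m : ℝ)) →
        ‖FT (v ε) ξ‖ ≤ ε ^ (m : ℝ))

/-- The "japanese bracket" `⟨ξ⟩ = (1+|ξ|²)^{1/2}`. -/
def jap {d : ℕ} (ξ : Eu d) : ℝ := Real.sqrt (1 + ‖ξ‖ ^ 2)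

/-- An S-moderate net of Schwartz functions. -/
def SModNet {d : ℕ} (v : ℝ → SchwartzMap (Eu d) ℂ) : Prop :=
  ∀ (L : List (Fin d)) (β : Fin d → ℕ), ∃ N : ℕ, SmallE fun ε =>
    ∀ x : Eu d, |∏ j, (x j) ^ (β j)| * ‖pdL L (⇑(v ε)) x‖ ≤ ε ^ (-(N : ℝ))

/-!
S-moderateness bounds `⟨x⟩^(d+1) ∂^α v_ε` by a power `ε^(-N)`, hence the `L¹` norms of
`∂^α v_ε`, hence `ξ^α v̂_ε(ξ)` uniformly in `ξ`: the Fourier transforms decay rapidly with moderate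
constants. Then (3) ⇒ (1) because `⟨ξ_ε⟩^m ≥ ε^(-a m)` at a fast scale point. For (2) ⇒ (3), take
`M` at least the exponent `N₂` of the decay of order `2m`: where `|ξ| ≥ ε^(-1/M)`, `⟨ξ⟩^m |v̂_ε|`
is the geometric mean of `⟨ξ⟩^(2m) |v̂_ε| ≤ ε^(-N₂)` and `|v̂_ε| ≤ ε^M`, so it is at most `1`;
elsewhere `⟨ξ⟩^m ≤ 2^m ε^(-1)`. For (1) ⇒ (2), if (2) fails for `m`, choose for every `ε` a point
of `Γ` with `|ξ| ≥ ε^(-1/m)` and `|v̂_ε(ξ)| > ε^m` when there is one, and a point of `Γ` of norm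
`ε^(-1/m)` otherwise (`Γ` is a cone). The decay of order one makes this net moderate, so (1)
applies to it and contradicts the choice for arbitrarily small `ε`.
-/

open Filter Topology LineDeriv
open scoped FourierTransform

theorem smallE_iff_eventually {P : ℝ → Prop} : SmallE P ↔ ∀ᶠ ε in 𝓝[>] (0 : ℝ), P ε := by
  simp only [SmallE, (nhdsGT_basis_Ioc (0 : ℝ)).eventually_iff, mem_Ioc, and_imp]

theorem eventually_le_one_nhdsGT_zero : ∀ᶠ ε in 𝓝[>] (0 : ℝ), ε ≤ 1 :=
  eventually_of_mem (Ioc_mem_nhdsGT zero_lt_one) fun _ h => h.2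

theorem eventually_rpow_neg_le_rpow_neg {N M : ℕ} (h : N ≤ M) :
    ∀ᶠ ε in 𝓝[>] (0 : ℝ), ε ^ (-(N : ℝ)) ≤ ε ^ (-(M : ℝ)) := by
  filter_upwards [self_mem_nhdsWithin, eventually_le_one_nhdsGT_zero] with ε hε hε1
  exact Real.rpow_le_rpow_of_exponent_ge hε hε1 (neg_le_neg (Nat.cast_le.mpr h))

theorem eventually_mul_rpow_neg_le (C : ℝ) (N : ℕ) :
    ∀ᶠ ε in 𝓝[>] (0 : ℝ), C * ε ^ (-(N : ℝ)) ≤ ε ^ (-((N + 1 : ℕ) : ℝ)) := by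
  filter_upwards [self_mem_nhdsWithin, tendsto_inv_nhdsGT_zero.eventually_ge_atTop C]
    with ε (hε : 0 < ε) hC
  calc C * ε ^ (-(N : ℝ)) ≤ ε⁻¹ * ε ^ (-(N : ℝ)) := by gcongr
    _ = ε ^ (-((N + 1 : ℕ) : ℝ)) := by
      rw [← Real.rpow_neg_one, ← Real.rpow_add hε]; push_cast; ring_nf

def UniformlyModerate {α : Type*} (F : ℝ → α → ℝ) : Prop :=
  ∃ N : ℕ, ∀ᶠ ε in 𝓝[>] (0 : ℝ), ∀ x, F ε x ≤ ε ^ (-(N : ℝ))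

namespace UniformlyModerate

variable {α : Type*} {F G : ℝ → α → ℝ}

theorem mono (hF : UniformlyModerate F) (h : ∀ ε x, G ε x ≤ F ε x) : UniformlyModerate G :=
  let ⟨N, hN⟩ := hF; ⟨N, hN.mono fun ε hε x => (h ε x).trans (hε x)⟩

theorem const_mul (hF : UniformlyModerate F) {c : ℝ} (hc : 0 ≤ c) :
    UniformlyModerate fun ε x => c * F ε x := by
  obtain ⟨N, hN⟩ := hF
  refine ⟨N + 1, ?_⟩
  filter_upwards [hN, eventually_mul_rpow_neg_le c N] with ε hε hc' x
  exact (mul_le_mul_of_nonneg_left (hε x) hc).trans hc'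

theorem add (hF : UniformlyModerate F) (hG : UniformlyModerate G) :
    UniformlyModerate fun ε x => F ε x + G ε x := by
  obtain ⟨N, hN⟩ := hF
  obtain ⟨M, hM⟩ := hG
  refine ⟨max N M + 1, ?_⟩
  filter_upwards [hN, hM, eventually_rpow_neg_le_rpow_neg (le_max_left N M),
    eventually_rpow_neg_le_rpow_neg (le_max_right N M), eventually_mul_rpow_neg_le 2 (max N M)]
    with ε hNε hMε hN' hM' h2 x
  linarith [hNε x, hMε x]

theorem sum {ι : Type*} (s : Finset ι) {F : ι → ℝ → α → ℝ}
    (h : ∀ i ∈ s, UniformlyModerate (F i)) :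
    UniformlyModerate fun ε x => ∑ i ∈ s, F i ε x := by
  classical
  induction s using Finset.induction_on with
  | empty =>
    exact ⟨0, Eventually.of_forall fun ε x => by simp⟩
  | insert a s ha ih =>
    simp only [Finset.sum_insert ha]
    exact (h a (Finset.mem_insert_self a s)).add (ih fun i hi => h i (Finset.mem_insert_of_mem hi))

end UniformlyModerate

theorem EuclideanSpace.norm_le_sum_abs {ι : Type*} [Fintype ι] (x : EuclideanSpace ℝ ι) :
    ‖x‖ ≤ ∑ i, |x i| := by
  conv_lhs => rw [← (EuclideanSpace.basisFun ι ℝ).sum_repr x]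
  refine (norm_sum_le _ _).trans_eq (Finset.sum_congr rfl fun i _ => ?_)
  simp [norm_smul]

theorem EuclideanSpace.one_add_norm_pow_le {ι : Type*} [Fintype ι] (x : EuclideanSpace ℝ ι)
    (n : ℕ) : (1 + ‖x‖) ^ (n + 1) ≤ (Fintype.card ι + 1) ^ n * (1 + ∑ i, |x i| ^ (n + 1)) := by
  have key := pow_sum_le_card_mul_sum_pow (s := Finset.univ) (n := n)
    (f := fun o : Option ι => o.elim 1 fun i => |x i|) (by rintro (_ | i) _ <;> simp)
  simp only [Fintype.sum_option, Option.elim, one_pow, Finset.card_univ, Fintype.card_option,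
    Nat.cast_add, Nat.cast_one] at key
  exact (pow_le_pow_left₀ (by positivity) (by gcongr; exact norm_le_sum_abs x) _).trans key

section Fourier

variable {d : ℕ}

theorem FT_eq_fourier (w : Eu d → ℂ) (ξ : Eu d) : FT w ξ = 𝓕 w ((2 * Real.pi)⁻¹ • ξ) := by
  rw [Real.fourier_eq']
  refine integral_congr_ae (Eventually.of_forall fun x => ?_)
  simp only [real_inner_smul_right, smul_eq_mul]
  congr 2
  push_cast
  field_simp

theorem norm_FT_le_integral_norm (w : Eu d → ℂ) (ξ : Eu d) : ‖FT w ξ‖ ≤ ∫ x, ‖w x‖ := by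
  refine (norm_integral_le_integral_norm _).trans_eq (integral_congr_ae
    (Eventually.of_forall fun x => ?_))
  simp [Complex.norm_exp]

theorem norm_FT_lineDerivOp (f : SchwartzMap (Eu d) ℂ) (m ξ : Eu d) :
    ‖FT ⇑(∂_{m} f : SchwartzMap (Eu d) ℂ) ξ‖ = |⟪ξ, m⟫| * ‖FT f ξ‖ := by
  have hm : (inner ℝ · m : Eu d → ℝ).HasTemperateGrowth :=
    ((innerSL ℝ).flip m).hasTemperateGrowth
  rw [FT_eq_fourier, FT_eq_fourier, ← SchwartzMap.fourier_coe, SchwartzMap.fourier_lineDerivOp_eq,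
    smul_apply, SchwartzMap.smulLeftCLM_apply_apply hm, SchwartzMap.fourier_coe]
  have h2π : ‖2 * (Real.pi : ℂ) * Complex.I‖ = 2 * Real.pi := by simp [abs_of_pos Real.pi_pos]
  rw [norm_smul, norm_smul, real_inner_smul_left, h2π, Real.norm_eq_abs, abs_mul, abs_inv,
    abs_of_pos (by positivity : 0 < 2 * Real.pi)]
  field_simp

end Fourier

theorem integral_norm_le_of_one_add_norm_pow_mul_le {E F : Type*} [NormedAddCommGroup E]
    [NormedSpace ℝ E] [FiniteDimensional ℝ E] [MeasurableSpace E] [BorelSpace E]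
    {μ : Measure E} [μ.IsAddHaarMeasure] [NormedAddCommGroup F] {f : E → F} {n : ℕ}
    (hn : Module.finrank ℝ E < n) {B : ℝ} (hB : ∀ x, (1 + ‖x‖) ^ n * ‖f x‖ ≤ B) :
    ∫ x, ‖f x‖ ∂μ ≤ (∫ x, (1 + ‖x‖) ^ (-(n : ℝ)) ∂μ) * B := by
  rw [← integral_mul_const]
  refine integral_mono_of_nonneg (Eventually.of_forall fun x => norm_nonneg _)
    ((integrable_one_add_norm (by exact_mod_cast hn)).mul_const B)
    (Eventually.of_forall fun x => ?_)
  have hx : 0 < (1 + ‖x‖) ^ n := by positivity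
  show ‖f x‖ ≤ (1 + ‖x‖) ^ (-(n : ℝ)) * B
  rw [Real.rpow_neg (by positivity), Real.rpow_natCast, inv_mul_eq_div, le_div_iff₀ hx, mul_comm]
  exact hB x

def SchwartzMap.pdL {d : ℕ} (L : List (Fin d)) (f : SchwartzMap (Eu d) ℂ) :
    SchwartzMap (Eu d) ℂ :=
  L.foldr (fun i g => ∂_{EuclideanSpace.single i (1 : ℝ)} g) f

theorem SchwartzMap.coe_pdL {d : ℕ} (L : List (Fin d)) (f : SchwartzMap (Eu d) ℂ) :
    ⇑(SchwartzMap.pdL L f) = _root_.pdL L ⇑f := by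
  induction L with
  | nil => rfl
  | cons i L ih =>
    funext x
    simp only [SchwartzMap.pdL, List.foldr_cons, _root_.pdL, pd] at ih ⊢
    rw [SchwartzMap.lineDerivOp_apply_eq_fderiv, ih]

namespace SModNet

variable {d : ℕ} {v : ℝ → SchwartzMap (Eu d) ℂ}

theorem uniformlyModerate_norm (hv : SModNet v) (L : List (Fin d)) :
    UniformlyModerate fun ε x => ‖SchwartzMap.pdL L (v ε) x‖ := by
  obtain ⟨N, hN⟩ := hv L 0
  exact ⟨N, (smallE_iff_eventually.mp hN).mono fun ε h x => by
    simpa [SchwartzMap.coe_pdL] using h x⟩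

theorem uniformlyModerate_abs_pow_mul (hv : SModNet v) (L : List (Fin d)) (j : Fin d) (k : ℕ) :
    UniformlyModerate fun ε x => |x j| ^ k * ‖SchwartzMap.pdL L (v ε) x‖ := by
  obtain ⟨N, hN⟩ := hv L (Pi.single j k : Fin d → ℕ)
  refine ⟨N, (smallE_iff_eventually.mp hN).mono fun ε h x => ?_⟩
  have hprod : ∏ i, x i ^ (Pi.single j k : Fin d → ℕ) i = x j ^ k :=
    (Fintype.prod_eq_single j fun i hi => by simp [hi]).trans (by simp)
  simpa [hprod, abs_pow, SchwartzMap.coe_pdL] using h x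

theorem uniformlyModerate_one_add_norm_pow_mul (hv : SModNet v) (L : List (Fin d)) :
    UniformlyModerate fun ε x => (1 + ‖x‖) ^ (d + 1) * ‖SchwartzMap.pdL L (v ε) x‖ := by
  refine ((hv.uniformlyModerate_norm L).add (UniformlyModerate.sum Finset.univ fun j _ =>
    hv.uniformlyModerate_abs_pow_mul L j (d + 1))).const_mul (c := (d + 1) ^ d)
    (by positivity) |>.mono fun ε x => ?_
  have h := EuclideanSpace.one_add_norm_pow_le x d
  simp only [Fintype.card_fin] at h
  calc (1 + ‖x‖) ^ (d + 1) * ‖SchwartzMap.pdL L (v ε) x‖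
      ≤ ((d + 1) ^ d * (1 + ∑ j, |x j| ^ (d + 1))) * ‖SchwartzMap.pdL L (v ε) x‖ := by gcongr
    _ = _ := by rw [mul_assoc, add_mul, one_mul, Finset.sum_mul]

theorem uniformlyModerate_norm_FT (hv : SModNet v) (L : List (Fin d)) :
    UniformlyModerate fun ε ξ => ‖FT (SchwartzMap.pdL L (v ε)) ξ‖ := by
  obtain ⟨N, hN⟩ := hv.uniformlyModerate_one_add_norm_pow_mul L
  refine ⟨N + 1, ?_⟩
  filter_upwards [hN, eventually_mul_rpow_neg_le _ N] with ε hε hI ξ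
  refine (norm_FT_le_integral_norm _ ξ).trans ((integral_norm_le_of_one_add_norm_pow_mul_le
    (by simp) hε).trans hI)

theorem uniformlyModerate_one_add_norm_pow_mul_FT (hv : SModNet v) (k : ℕ) (L : List (Fin d)) :
    UniformlyModerate fun ε ξ => (1 + ‖ξ‖) ^ k * ‖FT (SchwartzMap.pdL L (v ε)) ξ‖ := by
  induction k generalizing L with
  | zero => simpa using hv.uniformlyModerate_norm_FT L
  | succ k ih =>
    refine ((ih L).add (UniformlyModerate.sum Finset.univ fun i _ => ih (i :: L))).mono
      fun ε ξ => ?_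
    have hderiv : ∀ i, ‖FT (SchwartzMap.pdL (i :: L) (v ε)) ξ‖
        = |ξ i| * ‖FT (SchwartzMap.pdL L (v ε)) ξ‖ := fun i => by
      simp [SchwartzMap.pdL, norm_FT_lineDerivOp, EuclideanSpace.inner_single_right]
    have hnorm := EuclideanSpace.norm_le_sum_abs ξ
    calc (1 + ‖ξ‖) ^ (k + 1) * ‖FT (SchwartzMap.pdL L (v ε)) ξ‖
        = (1 + ‖ξ‖) ^ k * ‖FT (SchwartzMap.pdL L (v ε)) ξ‖
          + ‖ξ‖ * ((1 + ‖ξ‖) ^ k * ‖FT (SchwartzMap.pdL L (v ε)) ξ‖) := by ring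
      _ ≤ (1 + ‖ξ‖) ^ k * ‖FT (SchwartzMap.pdL L (v ε)) ξ‖
          + (∑ i, |ξ i|) * ((1 + ‖ξ‖) ^ k * ‖FT (SchwartzMap.pdL L (v ε)) ξ‖) := by gcongr
      _ = _ := by simp only [hderiv, Finset.sum_mul]; ring_nf

theorem uniformlyModerate_FT (hv : SModNet v) (k : ℕ) :
    UniformlyModerate fun ε ξ => (1 + ‖ξ‖) ^ k * ‖FT (v ε) ξ‖ :=
  hv.uniformlyModerate_one_add_norm_pow_mul_FT k []

end SModNet

theorem norm_le_jap {d : ℕ} (ξ : Eu d) : ‖ξ‖ ≤ jap ξ :=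
  Real.le_sqrt_of_sq_le (le_add_of_nonneg_left zero_le_one)

theorem negNet_of_jap_pow_mul_le {d : ℕ} (w : ℝ → Eu d → ℂ) (Γ : Set (Eu d))
    (h : ∃ N : ℕ, ∀ m : ℕ, 1 ≤ m → SmallE fun ε => ∀ ξ ∈ Γ,
      jap ξ ^ m * ‖w ε ξ‖ ≤ ε ^ (-(N : ℝ)))
    (ξ : ℝ → Eu d) (hξ : FastScale ξ) (hξΓ : ∀ ε : ℝ, 0 < ε → ε ≤ 1 → ξ ε ∈ Γ) :
    NegNet fun ε => w ε (ξ ε) := by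
  obtain ⟨N, hN⟩ := h
  obtain ⟨a, ha, hξa⟩ := hξ
  intro k
  obtain ⟨m, hm⟩ := exists_nat_ge ((N + k) / a)
  have hma : (N : ℝ) + k ≤ a * (m + 1 : ℕ) := by
    rw [div_le_iff₀ ha] at hm; push_cast; nlinarith
  rw [smallE_iff_eventually] at hξa ⊢
  filter_upwards [smallE_iff_eventually.mp (hN (m + 1) (Nat.le_add_left 1 m)), hξa,
    self_mem_nhdsWithin, eventually_le_one_nhdsGT_zero] with ε hεN hεa (hε : 0 < ε) hε1
  have hjap : ε ^ (-(a * (m + 1 : ℕ))) ≤ jap (ξ ε) ^ (m + 1) := by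
    rw [neg_mul_eq_neg_mul, Real.rpow_mul_natCast hε.le]
    exact pow_le_pow_left₀ (by positivity) (hεa.trans (norm_le_jap _)) _
  calc ‖w ε (ξ ε)‖ ≤ ε ^ (-(N : ℝ)) / ε ^ (-(a * (m + 1 : ℕ))) := by
        rw [le_div_iff₀' (by positivity)]
        exact (mul_le_mul_of_nonneg_right hjap (norm_nonneg _)).trans (hεN _ (hξΓ ε hε hε1))
    _ = ε ^ (a * (m + 1 : ℕ) - N) := by rw [← Real.rpow_sub hε]; ring_nf
    _ ≤ ε ^ (k : ℝ) := Real.rpow_le_rpow_of_exponent_ge hε hε1 (by linarith)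

theorem one_add_pow_le_of_lt_rpow {ε t : ℝ} (hε : 0 < ε) (hε1 : ε ≤ 1) (ht : 0 ≤ t) {m M : ℕ}
    (hmM : m ≤ M) (hM : (0 : ℝ) < M) (h : t < ε ^ (-(1 / (M : ℝ)))) :
    (1 + t) ^ m ≤ 2 ^ m * ε ^ (-1 : ℝ) := by
  have hone : 1 ≤ ε ^ (-(1 / (M : ℝ))) :=
    Real.one_le_rpow_of_pos_of_le_one_of_nonpos hε hε1 (by simp [hM.le])
  have hpow : (ε ^ (-(1 / (M : ℝ)))) ^ m ≤ ε ^ (-1 : ℝ) := by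
    rw [← Real.rpow_mul_natCast hε.le]
    refine Real.rpow_le_rpow_of_exponent_ge hε hε1 ?_
    rw [neg_mul, neg_le_neg_iff, one_div, inv_mul_le_iff₀ hM, mul_one]
    exact_mod_cast hmM
  calc (1 + t) ^ m ≤ (2 * ε ^ (-(1 / (M : ℝ)))) ^ m := by gcongr; linarith
    _ ≤ 2 ^ m * ε ^ (-1 : ℝ) := by rw [mul_pow]; gcongr

theorem SModNet.jap_pow_mul_norm_FT_le_of_smallE {d : ℕ} {v : ℝ → SchwartzMap (Eu d) ℂ}
    (hv : SModNet v) {Γ : Set (Eu d)}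
    (h : ∀ m : ℕ, 1 ≤ m → SmallE fun ε => ∀ ξ ∈ Γ,
      ε ^ (-(1 / (m : ℝ))) ≤ ‖ξ‖ → ‖FT (v ε) ξ‖ ≤ ε ^ (m : ℝ)) :
    ∃ N : ℕ, ∀ m : ℕ, 1 ≤ m → SmallE fun ε => ∀ ξ ∈ Γ,
      jap ξ ^ m * ‖FT (v ε) ξ‖ ≤ ε ^ (-(N : ℝ)) := by
  obtain ⟨N₀, hN₀⟩ := hv.uniformlyModerate_FT 0
  refine ⟨N₀ + 2, fun m hm => ?_⟩
  obtain ⟨N₂, hN₂⟩ := hv.uniformlyModerate_FT (2 * m)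
  set M := max m N₂
  have hMpos : (0 : ℝ) < M := by positivity
  rw [smallE_iff_eventually]
  filter_upwards [smallE_iff_eventually.mp (h M (hm.trans (le_max_left m N₂))), hN₀, hN₂,
    self_mem_nhdsWithin, eventually_le_one_nhdsGT_zero, eventually_mul_rpow_neg_le (2 ^ m) (N₀ + 1)]
    with ε hfar hε₀ hε₂ (hε : 0 < ε) hε1 hconst ξ hξ
  simp only [pow_zero, one_mul] at hε₀
  have hjap : jap ξ ^ m ≤ (1 + ‖ξ‖) ^ m :=
    pow_le_pow_left₀ (Real.sqrt_nonneg _) (sqrt_one_add_norm_sq_le ξ) m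
  refine (mul_le_mul_of_nonneg_right hjap (norm_nonneg _)).trans ?_
  by_cases hξfar : ε ^ (-(1 / (M : ℝ))) ≤ ‖ξ‖
  · have hsq : ((1 + ‖ξ‖) ^ m * ‖FT (v ε) ξ‖) ^ 2 ≤ 1 :=
      calc ((1 + ‖ξ‖) ^ m * ‖FT (v ε) ξ‖) ^ 2
          = (1 + ‖ξ‖) ^ (2 * m) * ‖FT (v ε) ξ‖ * ‖FT (v ε) ξ‖ := by ring
        _ ≤ ε ^ (-(N₂ : ℝ)) * ε ^ (M : ℝ) :=
          mul_le_mul (hε₂ ξ) (hfar ξ hξ hξfar) (norm_nonneg _) (by positivity)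
        _ = ε ^ ((M : ℝ) - N₂) := by rw [← Real.rpow_add hε]; ring_nf
        _ ≤ 1 := Real.rpow_le_one hε.le hε1
          (sub_nonneg.mpr (Nat.cast_le.mpr (le_max_right m N₂)))
    exact (pow_le_one_iff_of_nonneg (by positivity) two_ne_zero).mp hsq |>.trans
      (Real.one_le_rpow_of_pos_of_le_one_of_nonpos hε hε1 (neg_nonpos.mpr (by positivity)))
  · calc (1 + ‖ξ‖) ^ m * ‖FT (v ε) ξ‖
        ≤ 2 ^ m * ε ^ (-1 : ℝ) * ε ^ (-(N₀ : ℝ)) := by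
          gcongr
          · exact one_add_pow_le_of_lt_rpow hε hε1 (norm_nonneg ξ) (le_max_left m N₂) hMpos
              (not_le.mp hξfar)
          · exact hε₀ ξ
      _ = 2 ^ m * ε ^ (-((N₀ + 1 : ℕ) : ℝ)) := by
        rw [mul_assoc, ← Real.rpow_add hε]; push_cast; ring_nf
      _ ≤ ε ^ (-((N₀ + 2 : ℕ) : ℝ)) := hconst

theorem exists_mem_norm_eq_of_smul_mem {E : Type*} [NormedAddCommGroup E] [NormedSpace ℝ E]
    {Γ : Set E} (hΓ : ∀ t : ℝ, 0 < t → ∀ ξ ∈ Γ, t • ξ ∈ Γ) {γ : E} (hγ : γ ∈ Γ) (hγ0 : γ ≠ 0)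
    {r : ℝ} (hr : 0 < r) : ∃ ζ ∈ Γ, ‖ζ‖ = r := by
  have hγn : 0 < ‖γ‖ := norm_pos_iff.mpr hγ0
  refine ⟨(r / ‖γ‖) • γ, hΓ _ (by positivity) γ hγ, ?_⟩
  rw [norm_smul, Real.norm_of_nonneg (by positivity), div_mul_cancel₀ _ hγn.ne']

theorem exists_net_of_smul_mem {E : Type*} [NormedAddCommGroup E] [NormedSpace ℝ E]
    {Γ : Set E} (hΓ : ∀ t : ℝ, 0 < t → ∀ ξ ∈ Γ, t • ξ ∈ Γ) {γ : E} (hγ : γ ∈ Γ) (hγ0 : γ ≠ 0)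
    (r : ℝ → ℝ) (hr : ∀ ε : ℝ, 0 < ε → 0 < r ε) (P : ℝ → E → Prop) :
    ∃ ξ : ℝ → E, ∀ ε : ℝ, 0 < ε → ξ ε ∈ Γ ∧ r ε ≤ ‖ξ ε‖ ∧ (‖ξ ε‖ ≤ r ε ∨ P ε (ξ ε)) ∧
      ((∃ ζ ∈ Γ, r ε ≤ ‖ζ‖ ∧ P ε ζ) → P ε (ξ ε)) := by
  have hpick : ∀ ε : ℝ, ∃ ζ : E, 0 < ε → ζ ∈ Γ ∧ r ε ≤ ‖ζ‖ ∧ (‖ζ‖ ≤ r ε ∨ P ε ζ) ∧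
      ((∃ ζ ∈ Γ, r ε ≤ ‖ζ‖ ∧ P ε ζ) → P ε ζ) := by
    intro ε
    by_cases hP : ∃ ζ ∈ Γ, r ε ≤ ‖ζ‖ ∧ P ε ζ
    · obtain ⟨ζ, hζ, hζr, hζP⟩ := hP
      exact ⟨ζ, fun _ => ⟨hζ, hζr, Or.inr hζP, fun _ => hζP⟩⟩
    by_cases hε : 0 < ε
    · obtain ⟨ζ, hζ, hζn⟩ := exists_mem_norm_eq_of_smul_mem hΓ hγ hγ0 (hr ε hε)
      exact ⟨ζ, fun _ => ⟨hζ, hζn.ge, Or.inl hζn.le, fun h' => absurd h' hP⟩⟩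
    · exact ⟨0, fun h' => absurd h' hε⟩
  choose ξ hξ using hpick
  exact ⟨ξ, hξ⟩

theorem SModNet.smallE_norm_FT_le_of_negNet {d : ℕ} {v : ℝ → SchwartzMap (Eu d) ℂ}
    (hv : SModNet v) {Γ : Set (Eu d)} (hΓ : ∀ t : ℝ, 0 < t → ∀ ξ ∈ Γ, t • ξ ∈ Γ)
    (h : ∀ ξ : ℝ → Eu d, ModNet ξ → FastScale ξ → (∀ ε : ℝ, 0 < ε → ε ≤ 1 → ξ ε ∈ Γ) →
      NegNet fun ε => FT (v ε) (ξ ε))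
    (m : ℕ) (hm : 1 ≤ m) :
    SmallE fun ε => ∀ ξ ∈ Γ, ε ^ (-(1 / (m : ℝ))) ≤ ‖ξ‖ → ‖FT (v ε) ξ‖ ≤ ε ^ (m : ℝ) := by
  by_contra hbad
  rw [smallE_iff_eventually, not_eventually] at hbad
  simp only [not_forall, not_le, exists_prop] at hbad
  obtain ⟨ε₁, ⟨γ, hγ, hγr, -⟩, hε₁ : 0 < ε₁⟩ := (hbad.and_eventually self_mem_nhdsWithin).exists
  have hγ0 : γ ≠ 0 := norm_pos_iff.mp ((Real.rpow_pos_of_pos hε₁ _).trans_le hγr)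
  obtain ⟨ξ, hξ⟩ := exists_net_of_smul_mem hΓ hγ hγ0 (fun ε => ε ^ (-(1 / (m : ℝ))))
    (fun ε hε => Real.rpow_pos_of_pos hε _) (fun ε ζ => ε ^ (m : ℝ) < ‖FT (v ε) ζ‖)
  obtain ⟨N₁, hN₁⟩ := hv.uniformlyModerate_FT 1
  have hmod : ModNet ξ := by
    refine ⟨N₁ + m, smallE_iff_eventually.mpr ?_⟩
    filter_upwards [hN₁, self_mem_nhdsWithin, eventually_le_one_nhdsGT_zero]
      with ε hεN (hε : 0 < ε) hε1
    obtain ⟨-, -, hnear | hFT, -⟩ := hξ ε hε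
    · refine hnear.trans (Real.rpow_le_rpow_of_exponent_ge hε hε1 ?_)
      have h1m : 1 / (m : ℝ) ≤ 1 := by rw [div_le_one (by positivity)]; exact_mod_cast hm
      have hm1 : (1 : ℝ) ≤ m := by exact_mod_cast hm
      push_cast
      linarith [N₁.cast_nonneg (α := ℝ)]
    · have hmul : ‖ξ ε‖ * ε ^ (m : ℝ) ≤ ε ^ (-(N₁ : ℝ)) := by
        calc ‖ξ ε‖ * ε ^ (m : ℝ) ≤ (1 + ‖ξ ε‖) ^ 1 * ‖FT (v ε) (ξ ε)‖ := by
              rw [pow_one]; gcongr; linarith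
          _ ≤ ε ^ (-(N₁ : ℝ)) := hεN _
      calc ‖ξ ε‖ ≤ ε ^ (-(N₁ : ℝ)) / ε ^ (m : ℝ) := (le_div_iff₀ (by positivity)).mpr hmul
        _ = ε ^ (-((N₁ + m : ℕ) : ℝ)) := by rw [← Real.rpow_sub hε]; push_cast; ring_nf
  have hfast : FastScale ξ :=
    ⟨1 / m, by positivity, 1, one_pos, fun ε hε _ => (hξ ε hε).2.1⟩
  have hneg := smallE_iff_eventually.mp (h ξ hmod hfast (fun ε hε _ => (hξ ε hε).1) m)
  obtain ⟨ε, ⟨hεbad, hεneg⟩, hε : 0 < ε⟩ :=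
    ((hbad.and_eventually hneg).and_eventually self_mem_nhdsWithin).exists
  exact (hεneg.trans_lt ((hξ ε hε).2.2.2 hεbad)).false

theorem stmt13_general {d : ℕ} (v : ℝ → SchwartzMap (Eu d) ℂ) (hv : SModNet v)
    (Γ : Set (Eu d))
    (hΓ : ∀ t : ℝ, 0 < t → ∀ ξ ∈ Γ, t • ξ ∈ Γ) :
    [ -- (1) vanishing at all moderate fast scale points of the cone
      (∀ ξ : ℝ → Eu d, ModNet ξ → FastScale ξ →
        (∀ ε : ℝ, 0 < ε → ε ≤ 1 → ξ ε ∈ Γ) →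
        NegNet fun ε => FT (⇑(v ε)) (ξ ε)),
      -- (2) sup estimates on the truncated cone
      (∀ m : ℕ, 1 ≤ m → SmallE fun ε => ∀ ξ ∈ Γ,
        ε ^ (-(1 / (m : ℝ))) ≤ ‖ξ‖ → ‖FT (⇑(v ε)) ξ‖ ≤ ε ^ (m : ℝ)),
      -- (3) rapid decrease estimates on the cone
      (∃ N : ℕ, ∀ m : ℕ, 1 ≤ m → SmallE fun ε => ∀ ξ ∈ Γ,
        jap ξ ^ m * ‖FT (⇑(v ε)) ξ‖ ≤ ε ^ (-(N : ℝ))) ].TFAE := by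
  tfae_have 1 → 2 := hv.smallE_norm_FT_le_of_negNet hΓ
  tfae_have 2 → 3 := hv.jap_pow_mul_norm_FT_le_of_smallE
  tfae_have 3 → 1 := fun h ξ _ hξ hξΓ => negNet_of_jap_pow_mul_le (fun ε => FT (v ε)) Γ h ξ hξ hξΓ
  tfae_finish

/-- Lemma 5.1: characterizations of the vanishing of the Fourier
transform of an S-moderate net of Schwartz functions on a nongeneralized cone. -/
theorem stmt13 {d : ℕ} (v : ℝ → SchwartzMap (Eu d) ℂ) (hv : SModNet v)
    (Γ : Set (Eu d)) (hΓ0 : (0 : Eu d) ∉ Γ)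
    (hΓ : ∀ t : ℝ, 0 < t → ∀ ξ ∈ Γ, t • ξ ∈ Γ) :
    [ -- (1) vanishing at all moderate fast scale points of the cone
      (∀ ξ : ℝ → Eu d, ModNet ξ → FastScale ξ →
        (∀ ε : ℝ, 0 < ε → ε ≤ 1 → ξ ε ∈ Γ) →
        NegNet fun ε => FT (⇑(v ε)) (ξ ε)),
      -- (2) sup estimates on the truncated cone
      (∀ m : ℕ, 1 ≤ m → SmallE fun ε => ∀ ξ ∈ Γ,
        ε ^ (-(1 / (m : ℝ))) ≤ ‖ξ‖ → ‖FT (⇑(v ε)) ξ‖ ≤ ε ^ (m : ℝ)),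
      -- (3) rapid decrease estimates on the cone
      (∃ N : ℕ, ∀ m : ℕ, 1 ≤ m → SmallE fun ε => ∀ ξ ∈ Γ,
        jap ξ ^ m * ‖FT (⇑(v ε)) ξ‖ ≤ ε ^ (-(N : ℝ))) ].TFAE :=
  stmt13_general v hv Γ hΓ
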